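/- Let s, t, α be positive integers with 2 ≤ α, α < s and α < t, and let G be a finite abelian group with line set 𝓛 making (G,𝓛) a proper partial geometry pg(s,t,α) admitting G as an abelian Singer group, such that the pair is of rigid type (axioms (i)–(vi) of the encoding). Then there exist positive integers x and c such that t + 1 = x(s + 1), (α+1)² − c(s+1) > 0, and x·((α+1)² − c(s+1)) = c·(s − α) (equivalently, x(α+1)² = c((x+1)(s+1) − (α+1))). -/

import Mathlib

/-!
The collinearity graph of a partial geometry `pg(s,t,α)` is strongly regular with parameters
`(v, s(t+1), s-1+t(α-1), α(t+1))` and restricted eigenvalues `θ = s-α`, `τ = -(t+1)`. As `G`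
acts regularly on the points by translation, this graph is a Cayley graph of `G`, so for every
nontrivial character `χ` the character sum `χ(D)` over the neighbours `D` of `1` equals `θ` or
`τ`. For a point `g ≠ 1` not collinear with `1`, orthogonality gives
`∑_χ (χ(D) - τ) χ(g⁻¹) = 0`, i.e. `(s+1)(t+1) + (s+t+1-α) z = 0` with `z` a sum of roots of
unity; being rational, `z` is an integer, so `s+t+1-α ∣ (s+1)(t+1)`.

Rigidity makes `G` act freely on the lines, so there are `x|G|` of them, and counting flags
gives `t+1 = x(s+1)`. Then `T = (x+1)(s+1) - (α+1)` divides `x(s+1)²`, and since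
`(x+1)(s+1) ≡ α+1 (mod T)` it divides `x(α+1)²`; the quotient is `c`.
-/

/-- Encoding of a partial geometry `pg(s,t,α)` whose point set is the abelian group `G`,
admitting `G` (acting by translation) as an abelian Singer group; the lines are the finite
subsets of `G` collected in `𝓛`.  Axioms (i)–(v). -/
structure IsPGSinger (G : Type*) [CommGroup G] [DecidableEq G]
    (𝓛 : Set (Finset G)) (s t α : ℕ) : Prop where
  /-- (i) every line has exactly `s+1` points -/
  line_card : ∀ L ∈ 𝓛, L.card = s + 1
  /-- (ii) every point lies on exactly `t+1` lines -/
  point_deg : ∀ x : G, {L | L ∈ 𝓛 ∧ x ∈ L}.ncard = t + 1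
  /-- (iii) two distinct lines share at most one point -/
  line_inter : ∀ L ∈ 𝓛, ∀ M ∈ 𝓛, L ≠ M → ((L : Set G) ∩ (M : Set G)).ncard ≤ 1
  /-- (iv) for a non-incident point–line pair `(x,L)`, exactly `α` lines through `x` meet `L` -/
  alpha_ax : ∀ x : G, ∀ L ∈ 𝓛, x ∉ L →
    {M | M ∈ 𝓛 ∧ x ∈ M ∧ ∃ y ∈ L, y ∈ M}.ncard = α
  /-- (v) the line set is closed under translation by elements of `G` -/
  translate : ∀ g : G, ∀ L ∈ 𝓛, L.image (fun y => g * y) ∈ 𝓛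

/-- (vi) The pair `(S,G)` is of rigid type: every line has trivial stabilizer in `G`. -/
def RigidType (G : Type*) [CommGroup G] [DecidableEq G] (𝓛 : Set (Finset G)) : Prop :=
  ∀ g : G, ∀ L ∈ 𝓛, L.image (fun y => g * y) = L → g = 1

open Finset

theorem MulAction.card_dvd_ncard_of_free {G X : Type*} [Group G] [MulAction G X] {S : Set X}
    (hS : ∀ g : G, ∀ x ∈ S, g • x ∈ S) (hfree : ∀ g : G, ∀ x ∈ S, g • x = x → g = 1) :
    Nat.card G ∣ S.ncard := by
  let S' : SubMulAction G X := ⟨S, fun g _ ↦ hS g _⟩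
  have hstab (x : S') : stabilizer G x = ⊥ :=
    (Subgroup.eq_bot_iff_forall _).mpr fun g hg ↦ hfree g x x.2 (congrArg Subtype.val hg)
  exact ⟨_, (Nat.card_congr (selfEquivOrbitsQuotientProd hstab)).trans (Nat.card_prod _ _)
    |>.trans (mul_comm _ _)⟩

theorem Int.dvd_of_isIntegral_mul_eq {K : Type*} [Field K] [CharZero K] {a b : ℤ} {z : K}
    (hz : IsIntegral ℤ z) (h : a * z = b) : a ∣ b := by
  rcases eq_or_ne a 0 with rfl | ha
  · simp_all [eq_comm]
  have hzq : z = ((b / a : ℚ) : K) := by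
    push_cast
    rw [← h]
    field_simp
  rw [hzq, ← eq_ratCast (algebraMap ℚ K), isIntegral_algebraMap_iff (algebraMap ℚ K).injective,
    IsIntegrallyClosed.isIntegral_iff] at hz
  obtain ⟨m, hm⟩ := hz
  rw [algebraMap_int_eq, eq_intCast, eq_div_iff (by exact_mod_cast ha)] at hm
  exact ⟨m, by exact_mod_cast (mul_comm (m : ℚ) a ▸ hm).symm⟩

section Characters

variable {G : Type*} [Group G] [Fintype G]

instance : HasEnoughRootsOfUnity ℂ (Monoid.exponent G) :=
  have : NeZero (Monoid.exponent G) := ⟨Monoid.exponent_ne_zero_of_finite⟩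
  inferInstance

noncomputable instance : Fintype (G →* ℂˣ) := Fintype.ofFinite _

theorem MonoidHom.sum_apply_eq_zero_of_ne_one {χ : G →* ℂˣ} (hχ : χ ≠ 1) :
    ∑ g, (χ g : ℂ) = 0 :=
  sum_hom_units_eq_zero ((Units.coeHom ℂ).comp χ) fun h ↦ hχ <| by
    ext g
    simpa using DFunLike.congr_fun h g

theorem MonoidHom.isIntegral_apply (χ : G →* ℂˣ) (g : G) : IsIntegral ℤ (χ g : ℂ) := by
  refine .of_pow (Fintype.card_pos (α := G)) ?_
  rw [← Units.val_pow_eq_pow_val, ← map_pow, pow_card_eq_one, map_one, Units.val_one]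
  exact isIntegral_one

theorem sum_monoidHom_apply_eq_zero_of_ne_one {G : Type*} [CommGroup G] [Fintype G] {g : G}
    (hg : g ≠ 1) : ∑ χ : G →* ℂˣ, (χ g : ℂ) = 0 := by
  obtain ⟨ψ, hψ⟩ := CommGroup.exists_apply_ne_one_of_hasEnoughRootsOfUnity G ℂ hg
  exact sum_hom_units_eq_zero ((Units.coeHom ℂ).comp (MonoidHom.eval g)) fun h ↦ hψ <| by
    simpa using DFunLike.congr_fun h ψ

end Characters

namespace SimpleGraph

theorem card_commonNeighbors_eq_card_filter {V : Type*} [Fintype V] (Γ : SimpleGraph V)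
    [DecidableRel Γ.Adj] (v w : V) :
    Fintype.card (Γ.commonNeighbors v w) = #{u | Γ.Adj v u ∧ Γ.Adj w u} := by
  rw [← Set.toFinset_card]
  congr 1
  ext u
  simp [mem_commonNeighbors]

section Group

variable {G : Type*} [Group G] [Fintype G] {Γ : SimpleGraph G} [DecidableRel Γ.Adj]

/-- For a translation-invariant graph on `G`, this is the eigenvalue of its adjacency matrix on
the eigenvector `χ`. -/
noncomputable def neighborCharSum (Γ : SimpleGraph G) [DecidableRel Γ.Adj] (χ : G →* ℂˣ) : ℂ :=
  ∑ d ∈ Γ.neighborFinset 1, (χ d : ℂ)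

variable (hΓ : ∀ g a b, Γ.Adj (g * a) (g * b) ↔ Γ.Adj a b)
include hΓ

theorem neighborFinset_eq_image [DecidableEq G] (g : G) :
    Γ.neighborFinset g = (Γ.neighborFinset 1).image (g * ·) := by
  ext a
  rw [mem_image]
  constructor
  · intro ha
    refine ⟨g⁻¹ * a, ?_, mul_inv_cancel_left g a⟩
    rw [mem_neighborFinset, ← hΓ g, mul_one, mul_inv_cancel_left]
    exact (mem_neighborFinset _ _ _).mp ha
  · rintro ⟨d, hd, rfl⟩
    rw [mem_neighborFinset, ← mul_one g, mul_assoc, one_mul, hΓ]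
    exact (mem_neighborFinset _ _ _).mp hd

theorem neighborCharSum_mul_self (χ : G →* ℂˣ) :
    Γ.neighborCharSum χ * Γ.neighborCharSum χ =
      ∑ g, (Fintype.card (Γ.commonNeighbors 1 g) : ℂ) * χ g := by
  classical
  calc Γ.neighborCharSum χ * Γ.neighborCharSum χ
      = ∑ d ∈ Γ.neighborFinset 1, ∑ e ∈ Γ.neighborFinset 1, (χ (d * e) : ℂ) := by
        simp [neighborCharSum, sum_mul_sum]
    _ = ∑ d ∈ Γ.neighborFinset 1, ∑ g, if Γ.Adj d g then (χ g : ℂ) else 0 := by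
        refine sum_congr rfl fun d _ ↦ ?_
        rw [← sum_filter, ← neighborFinset_eq_filter, neighborFinset_eq_image hΓ d,
          sum_image fun _ _ _ _ ↦ mul_left_cancel]
    _ = ∑ g, (Fintype.card (Γ.commonNeighbors 1 g) : ℂ) * χ g := by
        rw [sum_comm]
        refine sum_congr rfl fun g _ ↦ ?_
        rw [← sum_filter, sum_const, nsmul_eq_mul, card_commonNeighbors_eq_card_filter]
        congr 3
        ext u
        simp [Γ.adj_comm u g]

namespace IsSRGWith

variable {n k ℓ μ : ℕ} (hsrg : Γ.IsSRGWith n k ℓ μ)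
include hsrg

theorem neighborCharSum_mul_self {χ : G →* ℂˣ} (hχ : χ ≠ 1) :
    Γ.neighborCharSum χ * Γ.neighborCharSum χ = (k - μ : ℂ) + (ℓ - μ) * Γ.neighborCharSum χ := by
  classical
  have hcard (g : G) : (Fintype.card (Γ.commonNeighbors 1 g) : ℂ) =
      μ + (if g = 1 then (k - μ : ℂ) else 0) + (if Γ.Adj 1 g then (ℓ - μ : ℂ) else 0) := by
    by_cases hg : g = 1
    · subst hg
      rw [card_commonNeighbors_eq_card_filter, ← hsrg.regular.degree_eq 1,
        ← card_neighborFinset_eq_degree, neighborFinset_eq_filter]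
      simp
    by_cases hadj : Γ.Adj 1 g
    · simp [hg, hadj, hsrg.of_adj 1 g hadj]
    · simp [hg, hadj, hsrg.of_not_adj (Ne.symm hg) hadj]
  rw [SimpleGraph.neighborCharSum_mul_self hΓ]
  simp only [hcard, add_mul, ite_mul, zero_mul, sum_add_distrib, ← mul_sum,
    MonoidHom.sum_apply_eq_zero_of_ne_one hχ, sum_ite_eq', mem_univ, if_true, ← sum_filter,
    ← neighborFinset_eq_filter, neighborCharSum, map_one, Units.val_one]
  ring

variable {θ τ : ℤ} (hsum : θ + τ = (ℓ : ℤ) - μ) (hprod : θ * τ = (μ : ℤ) - k)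
include hsum hprod

theorem neighborCharSum_eq_or_eq {χ : G →* ℂˣ} (hχ : χ ≠ 1) :
    Γ.neighborCharSum χ = θ ∨ Γ.neighborCharSum χ = τ := by
  have hsum' : (θ + τ : ℂ) = ℓ - μ := by exact_mod_cast hsum
  have hprod' : (θ * τ : ℂ) = μ - k := by exact_mod_cast hprod
  have : (Γ.neighborCharSum χ - θ) * (Γ.neighborCharSum χ - τ) = 0 := by
    linear_combination hsrg.neighborCharSum_mul_self hΓ hχ - Γ.neighborCharSum χ * hsum' + hprod'
  simpa [sub_eq_zero] using this

end IsSRGWith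

end Group

theorem IsSRGWith.sub_dvd_sub {G : Type*} [CommGroup G] [Fintype G] {Γ : SimpleGraph G}
    [DecidableRel Γ.Adj] (hΓ : ∀ g a b, Γ.Adj (g * a) (g * b) ↔ Γ.Adj a b) {n k ℓ μ : ℕ}
    (hsrg : Γ.IsSRGWith n k ℓ μ) {θ τ : ℤ} (hsum : θ + τ = (ℓ : ℤ) - μ)
    (hprod : θ * τ = (μ : ℤ) - k) {g₀ : G} (hg₀ : g₀ ≠ 1) (hn : ¬ Γ.Adj 1 g₀) :
    θ - τ ∣ (k : ℤ) - τ := by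
  classical
  set F := Γ.neighborCharSum
  set z : ℂ := ∑ χ with χ ≠ 1 ∧ F χ = θ, (χ g₀⁻¹ : ℂ) with hz_def
  have hz : IsIntegral ℤ z := IsIntegral.sum _ fun χ _ ↦ χ.isIntegral_apply _
  refine Int.dvd_of_isIntegral_mul_eq hz.neg ?_
  have horth : ∑ χ : G →* ℂˣ, (F χ - τ) * χ g₀⁻¹ = 0 := by
    simp only [sub_mul, sum_sub_distrib, ← mul_sum,
      sum_monoidHom_apply_eq_zero_of_ne_one (inv_ne_one.mpr hg₀), mul_zero, sub_zero, F,
      neighborCharSum, sum_mul, ← Units.val_mul, ← map_mul]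
    rw [sum_comm]
    refine sum_eq_zero fun d hd ↦ sum_monoidHom_apply_eq_zero_of_ne_one ?_
    rw [Ne, mul_inv_eq_one]
    rintro rfl
    exact hn ((mem_neighborFinset _ _ _).mp hd)
  have hsplit : ∑ χ : G →* ℂˣ, (F χ - τ) * χ g₀⁻¹ = (k - τ) + (θ - τ) * z := by
    rw [hz_def, sum_filter, mul_sum, ← Fintype.sum_ite_eq' (1 : G →* ℂˣ) fun _ ↦ (k - τ : ℂ),
      ← sum_add_distrib]
    refine sum_congr rfl fun χ _ ↦ ?_
    by_cases hχ : χ = 1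
    · subst hχ
      simp [F, neighborCharSum, ← hsrg.regular.degree_eq 1]
    · have hF : F χ = θ ∨ F χ = τ := hsrg.neighborCharSum_eq_or_eq hΓ hsum hprod hχ
      rcases hF with h | h
      · simp [hχ, h]
      · simp +contextual [hχ, h]
  push_cast
  linear_combination hsplit - horth

end SimpleGraph

section PartialGeometry

variable {P : Type*}

structure IsPartialGeometry (𝓛 : Set (Finset P)) (s t α : ℕ) : Prop where
  line_card : ∀ L ∈ 𝓛, L.card = s + 1
  point_deg : ∀ x : P, {L | L ∈ 𝓛 ∧ x ∈ L}.ncard = t + 1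
  line_inter : ∀ L ∈ 𝓛, ∀ M ∈ 𝓛, L ≠ M → ((L : Set P) ∩ (M : Set P)).ncard ≤ 1
  alpha_ax : ∀ x : P, ∀ L ∈ 𝓛, x ∉ L → {M | M ∈ 𝓛 ∧ x ∈ M ∧ ∃ y ∈ L, y ∈ M}.ncard = α

@[simps]
def collinearityGraph (𝓛 : Set (Finset P)) : SimpleGraph P where
  Adj p q := p ≠ q ∧ ∃ L ∈ 𝓛, p ∈ L ∧ q ∈ L
  symm := ⟨fun _ _ ⟨hpq, L, hL, hp, hq⟩ ↦ ⟨hpq.symm, L, hL, hq, hp⟩⟩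
  loopless := ⟨fun _ h ↦ h.1 rfl⟩

noncomputable def linesThrough [Finite P] (𝓛 : Set (Finset P)) (p : P) : Finset (Finset P) :=
  (Set.toFinite {L | L ∈ 𝓛 ∧ p ∈ L}).toFinset

@[simp]
theorem mem_linesThrough [Finite P] {𝓛 : Set (Finset P)} {p : P} {L : Finset P} :
    L ∈ linesThrough 𝓛 p ↔ L ∈ 𝓛 ∧ p ∈ L :=
  Set.Finite.mem_toFinset _

namespace IsPartialGeometry

variable {𝓛 : Set (Finset P)} {s t α : ℕ} (h : IsPartialGeometry 𝓛 s t α)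
include h

theorem eq_of_mem_of_mem {L M : Finset P} (hL : L ∈ 𝓛) (hM : M ∈ 𝓛) {p q : P} (hpq : p ≠ q)
    (hpL : p ∈ L) (hqL : q ∈ L) (hpM : p ∈ M) (hqM : q ∈ M) : L = M := by
  by_contra hLM
  have := h.line_inter L hL M hM hLM
  rw [← not_lt, Set.one_lt_ncard (Set.toFinite _)] at this
  exact this ⟨p, ⟨hpL, hpM⟩, q, ⟨hqL, hqM⟩, hpq⟩

theorem card_linesThrough [Finite P] (p : P) : #(linesThrough 𝓛 p) = t + 1 := by
  rw [linesThrough, ← Set.ncard_eq_toFinset_card, h.point_deg]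

theorem card_filter_adj_of_notMem [DecidableRel (collinearityGraph 𝓛).Adj] {L : Finset P}
    (hL : L ∈ 𝓛) {q : P} (hq : q ∉ L) : #{y ∈ L | (collinearityGraph 𝓛).Adj q y} = α := by
  rw [← h.alpha_ax q L hL hq, ← Set.ncard_coe_finset]
  symm
  refine Set.ncard_congr (fun M hM ↦ hM.2.2.choose) ?_ ?_ ?_
  · rintro M ⟨hM, hqM, hex⟩
    obtain ⟨hyL, hyM⟩ := hex.choose_spec
    exact mem_filter.mpr ⟨hyL, (ne_of_mem_of_not_mem hyL hq).symm, M, hM, hqM, hyM⟩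
  · rintro M M' ⟨hM, hqM, hex⟩ ⟨hM', hqM', hex'⟩ hyy
    obtain ⟨hyL, hyM⟩ := hex.choose_spec
    obtain ⟨-, hyM'⟩ := hex'.choose_spec
    exact h.eq_of_mem_of_mem hM hM' (ne_of_mem_of_not_mem hyL hq).symm hqM hyM hqM' (hyy ▸ hyM')
  · intro y hy
    obtain ⟨hyL, -, M, hM, hqM, hyM⟩ := mem_filter.mp hy
    have hex : ∃ y ∈ L, y ∈ M := ⟨y, hyL, hyM⟩
    refine ⟨M, ⟨hM, hqM, hex⟩, ?_⟩
    obtain ⟨hy'L, hy'M⟩ := hex.choose_spec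
    by_contra hne
    exact hq (h.eq_of_mem_of_mem hL hM hne hy'L hyL hy'M hyM ▸ hqM)

variable [Fintype P]

theorem ncard_mul_eq : 𝓛.ncard * (s + 1) = Fintype.card P * (t + 1) := by
  classical
  rw [Set.ncard_eq_toFinset_card 𝓛, ← card_univ]
  refine card_mul_eq_card_mul (fun L p ↦ p ∈ L) (fun L hL ↦ ?_) fun p _ ↦ ?_
  · rw [bipartiteAbove, filter_mem_eq_inter, univ_inter, h.line_card L (by simpa using hL)]
  · rw [bipartiteBelow, ← h.card_linesThrough p]
    congr 1
    ext L
    simp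

theorem exists_not_adj [Nonempty P] (hs : 0 < s) (ht : 0 < t) (hα : α ≤ s) :
    ∃ p q, p ≠ q ∧ ¬ (collinearityGraph 𝓛).Adj p q := by
  classical
  obtain ⟨p⟩ := ‹Nonempty P›
  obtain ⟨L, hL, M, hM, hLM⟩ :=
    one_lt_card.mp (show 1 < #(linesThrough 𝓛 p) by rw [h.card_linesThrough]; omega)
  rw [mem_linesThrough] at hL hM
  obtain ⟨q, hqM, hqp⟩ := exists_mem_ne (show 1 < #M by rw [h.line_card M hM.1]; omega) p
  have hqL : q ∉ L := fun hqL ↦ hLM (h.eq_of_mem_of_mem hL.1 hM.1 hqp hqL hL.2 hqM hM.2)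
  by_contra! hall
  have hcard := h.card_filter_adj_of_notMem hL.1 hqL
  rw [filter_true_of_mem fun y hy ↦ hall q y (ne_of_mem_of_not_mem hy hqL).symm,
    h.line_card L hL.1] at hcard
  omega

variable [DecidableRel (collinearityGraph 𝓛).Adj]

theorem card_filter_adj_eq_sum [DecidableEq P] (Q : P → Prop) [DecidablePred Q] (p : P) :
    #{y | (collinearityGraph 𝓛).Adj p y ∧ Q y} =
      ∑ L ∈ linesThrough 𝓛 p, #({y ∈ L | Q y}.erase p) := by
  rw [← card_biUnion]
  · congr 1
    ext y
    simp only [mem_filter, mem_univ, true_and, collinearityGraph_adj, mem_biUnion, mem_erase,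
      mem_linesThrough]
    constructor
    · rintro ⟨⟨hpy, L, hL, hp, hy⟩, hQ⟩
      exact ⟨L, ⟨hL, hp⟩, hpy.symm, hy, hQ⟩
    · rintro ⟨L, ⟨hL, hp⟩, hyp, hy, hQ⟩
      exact ⟨⟨hyp.symm, L, hL, hp, hy⟩, hQ⟩
  · intro L hL M hM hLM
    refine disjoint_left.mpr fun y hyL hyM ↦ hLM ?_
    simp only [mem_coe, mem_linesThrough, mem_erase, mem_filter] at hL hM hyL hyM
    exact h.eq_of_mem_of_mem hL.1 hM.1 hyL.1 hyL.2.1 hL.2 hyM.2.1 hM.2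

theorem degree_eq (p : P) : (collinearityGraph 𝓛).degree p = s * (t + 1) := by
  classical
  have := h.card_filter_adj_eq_sum (fun _ ↦ True) p
  simp only [and_true, filter_true] at this
  rw [← SimpleGraph.card_neighborFinset_eq_degree, SimpleGraph.neighborFinset_eq_filter, this,
    sum_congr rfl fun L hL ↦ ?_, sum_const, h.card_linesThrough, smul_eq_mul, mul_comm]
  rw [mem_linesThrough] at hL
  rw [card_erase_of_mem hL.2, h.line_card L hL.1, Nat.add_sub_cancel]

theorem card_commonNeighbors_of_not_adj {p q : P} (hpq : p ≠ q)
    (hn : ¬ (collinearityGraph 𝓛).Adj p q) :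
    Fintype.card ((collinearityGraph 𝓛).commonNeighbors p q) = α * (t + 1) := by
  classical
  rw [SimpleGraph.card_commonNeighbors_eq_card_filter, h.card_filter_adj_eq_sum,
    sum_congr rfl fun L hL ↦ ?_, sum_const, h.card_linesThrough, smul_eq_mul, mul_comm]
  rw [mem_linesThrough] at hL
  have hqL : q ∉ L := fun hqL ↦ hn ⟨hpq, L, hL.1, hL.2, hqL⟩
  rw [erase_eq_of_notMem fun hp ↦ hn (mem_filter.mp hp).2.symm,
    h.card_filter_adj_of_notMem hL.1 hqL]

theorem card_commonNeighbors_of_adj {p q : P} (hpq : (collinearityGraph 𝓛).Adj p q) :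
    Fintype.card ((collinearityGraph 𝓛).commonNeighbors p q) = s - 1 + t * (α - 1) := by
  classical
  obtain ⟨hne, M, hM, hpM, hqM⟩ := hpq
  have hMp : M ∈ linesThrough 𝓛 p := mem_linesThrough.mpr ⟨hM, hpM⟩
  rw [SimpleGraph.card_commonNeighbors_eq_card_filter, h.card_filter_adj_eq_sum,
    ← add_sum_erase _ _ hMp, sum_congr rfl fun L hL ↦ ?_, sum_const, card_erase_of_mem hMp,
    h.card_linesThrough, smul_eq_mul, Nat.add_sub_cancel]
  · have hfilter : {y ∈ M | (collinearityGraph 𝓛).Adj q y} = M.erase q := by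
      ext y
      simp only [mem_filter, mem_erase, collinearityGraph_adj]
      exact ⟨fun ⟨hy, hqy, _⟩ ↦ ⟨hqy.symm, hy⟩, fun ⟨hyq, hy⟩ ↦ ⟨hy, hyq.symm, M, hM, hqM, hy⟩⟩
    rw [hfilter, card_erase_of_mem (mem_erase.mpr ⟨hne, hpM⟩), card_erase_of_mem hqM,
      h.line_card M hM]
    rfl
  · obtain ⟨hLM, hL⟩ := mem_erase.mp hL
    rw [mem_linesThrough] at hL
    have hqL : q ∉ L := fun hqL ↦ hLM (h.eq_of_mem_of_mem hL.1 hM hne hL.2 hqL hpM hqM)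
    rw [card_erase_of_mem (mem_filter.mpr ⟨hL.2, hne.symm, M, hM, hqM, hpM⟩),
      h.card_filter_adj_of_notMem hL.1 hqL]

theorem isSRGWith : (collinearityGraph 𝓛).IsSRGWith (Fintype.card P) (s * (t + 1))
    (s - 1 + t * (α - 1)) (α * (t + 1)) where
  card := rfl
  regular := h.degree_eq
  of_adj _ _ := h.card_commonNeighbors_of_adj
  of_not_adj _ _ hpq := h.card_commonNeighbors_of_not_adj hpq

end IsPartialGeometry

end PartialGeometry

namespace IsPGSinger

open scoped Pointwise

variable {G : Type*} [CommGroup G] [DecidableEq G] {𝓛 : Set (Finset G)} {s t α : ℕ}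
  (h : IsPGSinger G 𝓛 s t α)
include h

theorem isPartialGeometry : IsPartialGeometry 𝓛 s t α :=
  ⟨h.line_card, h.point_deg, h.line_inter, h.alpha_ax⟩

theorem collinearityGraph_adj_mul_iff (g a b : G) :
    (collinearityGraph 𝓛).Adj (g * a) (g * b) ↔ (collinearityGraph 𝓛).Adj a b := by
  have key (g a b : G) (hab : (collinearityGraph 𝓛).Adj a b) :
      (collinearityGraph 𝓛).Adj (g * a) (g * b) := by
    obtain ⟨hne, L, hL, ha, hb⟩ := hab
    exact ⟨by simpa using hne, _, h.translate g L hL, mem_image_of_mem _ ha, mem_image_of_mem _ hb⟩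
  exact ⟨fun hab ↦ by simpa using key g⁻¹ _ _ hab, key g a b⟩

theorem card_dvd_ncard (hrig : RigidType G 𝓛) : Nat.card G ∣ 𝓛.ncard :=
  MulAction.card_dvd_ncard_of_free h.translate hrig

theorem sub_add_dvd [Fintype G] (hs : 0 < s) (ht : 0 < t) (hα : 0 < α) (hαs : α ≤ s) :
    (s : ℤ) - α + (t + 1) ∣ (s + 1) * (t + 1) := by
  classical
  obtain ⟨p, q, hpq, hn⟩ := h.isPartialGeometry.exists_not_adj hs ht hαs
  have hn' : ¬ (collinearityGraph 𝓛).Adj 1 (p⁻¹ * q) := by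
    rwa [← h.collinearityGraph_adj_mul_iff p, mul_one, mul_inv_cancel_left]
  have hsum : ((s : ℤ) - α) + -(t + 1) = ((s - 1 + t * (α - 1) : ℕ) : ℤ) - (α * (t + 1) : ℕ) := by
    push_cast [Nat.cast_sub hs, Nat.cast_sub hα]
    ring
  have hprod : ((s : ℤ) - α) * -(t + 1) = ((α * (t + 1) : ℕ) : ℤ) - (s * (t + 1) : ℕ) := by
    push_cast
    ring
  have := h.isPartialGeometry.isSRGWith.sub_dvd_sub h.collinearityGraph_adj_mul_iff hsum hprod
    (by rwa [Ne, inv_mul_eq_one]) hn'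
  convert this using 1 <;> push_cast <;> ring

end IsPGSinger

theorem exists_mul_sq_eq_of_dvd {x s α : ℕ} (hαs : α < s) (hx : 0 < x)
    (hdvd : (s : ℤ) - α + x * (s + 1) ∣ (s + 1) * (x * (s + 1))) :
    ∃ c : ℕ, 0 < c ∧ c * (s + 1) < (α + 1) ^ 2 ∧
      x * ((α + 1) ^ 2 - c * (s + 1)) = c * (s - α) ∧
      x * (α + 1) ^ 2 = c * ((x + 1) * (s + 1) - (α + 1)) := by
  set T := s - α + x * (s + 1) with hT
  have hTz : (T : ℤ) = s - α + x * (s + 1) := by push_cast [hT, Nat.cast_sub hαs.le]; ring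
  have hTdvd : (T : ℤ) ∣ ((x * (α + 1) ^ 2 : ℕ) : ℤ) := by
    -- `α + 1 ≡ (x + 1)(s + 1) (mod T)`
    have hα : (α + 1 : ℤ) = (x + 1) * (s + 1) - T := by rw [hTz]; ring
    have : (x * (α + 1) ^ 2 : ℤ) =
        (x + 1) ^ 2 * ((s + 1) * (x * (s + 1))) - T * (2 * x * ((x + 1) * (s + 1)) - x * T) := by
      rw [hα]; ring
    push_cast
    rw [this]
    exact dvd_sub (dvd_mul_of_dvd_right (hTz ▸ hdvd) _) (dvd_mul_right _ _)
  obtain ⟨c, hc⟩ := Int.natCast_dvd_natCast.mp hTdvd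
  have hc0 : 0 < c := Nat.pos_of_ne_zero fun hc0 ↦ by simp [hc0] at hc; omega
  have hlt : c * (s + 1) < (α + 1) ^ 2 := by
    refine Nat.lt_of_mul_lt_mul_left (a := x) ?_
    calc x * (c * (s + 1)) = c * (x * (s + 1)) := by ring
      _ < c * T := Nat.mul_lt_mul_of_pos_left (by omega) hc0
      _ = x * (α + 1) ^ 2 := by rw [hc, mul_comm]
  refine ⟨c, hc0, hlt, ?_, ?_⟩
  · zify [hlt.le, hαs.le] at hc ⊢
    linear_combination hc + c * hTz
  · have hT' : (x + 1) * (s + 1) - (α + 1) = T := by rw [add_one_mul]; omega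
    rw [hT', hc, mul_comm]

/-- for a proper `pg(s,t,α)` of rigid type with abelian Singer group `G`,
there are positive integers `x`, `c` with `t+1 = x(s+1)`, `(α+1)² - c(s+1) > 0` and
`x((α+1)² - c(s+1)) = c(s-α)` (equivalently `x(α+1)² = c((x+1)(s+1) - (α+1))`). -/
theorem rigid_type_x_c_relation
    (G : Type*) [CommGroup G] [Fintype G] [DecidableEq G]
    (s t α : ℕ) (hα2 : 2 ≤ α) (hαs : α < s) (hαt : α < t)
    (𝓛 : Set (Finset G)) (hpg : IsPGSinger G 𝓛 s t α) (hrig : RigidType G 𝓛) :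
    ∃ x c : ℕ, 0 < x ∧ 0 < c ∧ t + 1 = x * (s + 1) ∧
      c * (s + 1) < (α + 1) ^ 2 ∧
      x * ((α + 1) ^ 2 - c * (s + 1)) = c * (s - α) ∧
      x * (α + 1) ^ 2 = c * ((x + 1) * (s + 1) - (α + 1)) := by
  obtain ⟨x, hx⟩ := hpg.card_dvd_ncard hrig
  have hts : t + 1 = x * (s + 1) := by
    have hcount := hpg.isPartialGeometry.ncard_mul_eq
    rw [hx, Nat.card_eq_fintype_card, mul_assoc] at hcount
    exact (Nat.eq_of_mul_eq_mul_left Fintype.card_pos hcount).symm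
  have hx0 : 0 < x := Nat.pos_of_ne_zero fun hx0 ↦ by simp [hx0] at hts
  have hdvd := hpg.sub_add_dvd (by omega) (by omega) (by omega) hαs.le
  rw [show (t : ℤ) + 1 = x * (s + 1) by exact_mod_cast hts] at hdvd
  obtain ⟨c, hc0, hc⟩ := exists_mul_sq_eq_of_dvd hαs hx0 hdvd
  exact ⟨x, c, hx0, hc0, hts, hc⟩
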